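/- arXiv:1302.5226 — 2 statements merged into one kernel-verified Lean document; each statement's English description precedes it below -/
import Mathlib

section
/- Let T : X₁ → X₂ be a bounded linear map such that T(e₁) ∈ ℝe₂. Then the operator norm of T with respect to the Hopf oscillation seminorms, ‖T‖_H = sup{‖T(z)‖_{H} : z ∈ X₁, ‖z‖_{H} ≤ 1}, satisfies ‖T‖_H = (1/2) sup_{ν,π ∈ P(e₂)} ‖T⋆(ν) − T⋆(π)‖_T⋆ = sup_{ν,π ∈ P(e₂)} sup_{x ∈ [0,e₁]} ⟨ν − π, T(x)⟩, where T⋆ is the adjoint of T. Moreover, the suprema over ν, π may be restricted to pairs of extreme points of P(e₂) that are disjoint: ‖T‖_H = (1/2) sup{‖T⋆(ν) − T⋆(π)‖_T⋆ : ν, π extreme in P(e₂), ν ⊥ π} = sup{sup_{x ∈ [0,e₁]} ⟨ν − π, T(x)⟩ : ν, π extreme in P(e₂), ν ⊥ π}. -/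
noncomputable section

/-- `M(x/y) = inf {t : ℝ | x ≤ t • y}`, where `x ≤ z` means `z - x ∈ C`. -/
def upSlope {X : Type*} [AddCommGroup X] [Module ℝ X] (C : Set X) (y x : X) : ℝ :=
  sInf {t : ℝ | t • y - x ∈ C}

/-- `m(x/y) = sup {t : ℝ | t • y ≤ x}`, where `x ≤ z` means `z - x ∈ C`. -/
def lowSlope {X : Type*} [AddCommGroup X] [Module ℝ X] (C : Set X) (y x : X) : ℝ :=
  sSup {t : ℝ | x - t • y ∈ C}

/-- Thompson's norm `‖x‖_T = max (M(x/e), -m(x/e))` with respect to the unit `e`. -/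
def thompsonNorm {X : Type*} [AddCommGroup X] [Module ℝ X] (C : Set X) (e x : X) : ℝ :=
  max (upSlope C e x) (-(lowSlope C e x))

/-- Hopf's oscillation seminorm `‖x‖_H = M(x/e) - m(x/e)` with respect to the unit `e`. -/
def hopfOsc {X : Type*} [AddCommGroup X] [Module ℝ X] (C : Set X) (e x : X) : ℝ :=
  upSlope C e x - lowSlope C e x

/-- The oscillation `ω(x/y) = M(x/y) - m(x/y)`. -/
def oscGen {X : Type*} [AddCommGroup X] [Module ℝ X] (C : Set X) (y x : X) : ℝ :=
  upSlope C y x - lowSlope C y x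

/-- Hilbert's projective metric `d_H(x,y) = log (M(x/y) / m(x/y))`. -/
def hilbertDist {X : Type*} [AddCommGroup X] [Module ℝ X] (C : Set X) (x y : X) : ℝ :=
  Real.log (upSlope C y x / lowSlope C y x)

/-- The dual cone `C⋆ = {μ ∈ X⋆ : ⟨μ,x⟩ ≥ 0 ∀ x ∈ C}` inside the topological dual. -/
def dualCone {X : Type*} [NormedAddCommGroup X] [NormedSpace ℝ X] (C : Set X) :
    Set (X →L[ℝ] ℝ) := {μ | ∀ x ∈ C, 0 ≤ μ x}

/-- The simplex `P(e) = {μ ∈ C⋆ : ⟨μ,e⟩ = 1}`. -/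
def simplexSet {X : Type*} [NormedAddCommGroup X] [NormedSpace ℝ X] (C : Set X) (e : X) :
    Set (X →L[ℝ] ℝ) := {μ | μ ∈ dualCone C ∧ μ e = 1}

/-- The dual norm of Thompson's norm. -/
def dualTNorm {X : Type*} [NormedAddCommGroup X] [NormedSpace ℝ X] (C : Set X) (e : X)
    (μ : X →L[ℝ] ℝ) : ℝ :=
  sSup {r : ℝ | ∃ x : X, thompsonNorm C e x ≤ 1 ∧ r = μ x}

/-- Disjointness `ν ⊥ π` of two elements of the simplex `P(e)`. -/
def disjointIn {X : Type*} [NormedAddCommGroup X] [NormedSpace ℝ X] (C : Set X) (e : X)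
    (ν π : X →L[ℝ] ℝ) : Prop :=
  ∀ μ ∈ simplexSet C e, μ - (2:ℝ)⁻¹ • ν ∈ dualCone C → μ - (2:ℝ)⁻¹ • π ∈ dualCone C →
    μ = (2:ℝ)⁻¹ • (ν + π)

/-- The order interval `[0,e] = {x : 0 ≤ x ≤ e}`. -/
def orderIntv {X : Type*} [AddCommGroup X] (C : Set X) (e : X) : Set X :=
  {x | x ∈ C ∧ e - x ∈ C}

/-- The operator (semi)norm of `T` with respect to Hopf's oscillation seminorms. -/
def opHNorm {X₁ : Type*} {X₂ : Type*} [NormedAddCommGroup X₁] [NormedSpace ℝ X₁]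
    [NormedAddCommGroup X₂] [NormedSpace ℝ X₂] (C₁ : Set X₁) (e₁ : X₁) (C₂ : Set X₂) (e₂ : X₂)
    (T : X₁ →L[ℝ] X₂) : ℝ :=
  sSup {r : ℝ | ∃ z : X₁, hopfOsc C₁ e₁ z ≤ 1 ∧ r = hopfOsc C₂ e₂ (T z)}

/-- `C` is a closed pointed convex cone. -/
def IsCPCone {X : Type*} [NormedAddCommGroup X] [NormedSpace ℝ X] (C : Set X) : Prop :=
  IsClosed C ∧ (∀ x ∈ C, ∀ y ∈ C, x + y ∈ C) ∧ (∀ t : ℝ, 0 ≤ t → ∀ x ∈ C, t • x ∈ C) ∧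
    (∀ x ∈ C, -x ∈ C → x = 0)

/-- `C` is a normal cone: `0 ≤ x ≤ y` implies `‖x‖ ≤ K ‖y‖` for some `K > 0`. -/
def IsNormalCone {X : Type*} [NormedAddCommGroup X] [NormedSpace ℝ X] (C : Set X) : Prop :=
  ∃ K > (0:ℝ), ∀ x y : X, x ∈ C → y - x ∈ C → ‖x‖ ≤ K * ‖y‖

/-- The contraction rate `h(L)` of the linear flow `ẋ = L(x)` in Hopf's oscillation seminorm. -/
def hFun {X : Type*} [NormedAddCommGroup X] [NormedSpace ℝ X] (C : Set X) (e : X)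
    (L : X →L[ℝ] X) : ℝ :=
  - sInf {r : ℝ | ∃ ν ∈ Set.extremePoints ℝ (simplexSet C e),
      ∃ π ∈ Set.extremePoints ℝ (simplexSet C e),
      ∃ x ∈ Set.extremePoints ℝ (orderIntv C e),
        ν x + π (e - x) = 0 ∧ r = ν (L x) + π (L (e - x))}

end


/-!
Hopf's oscillation measures the width of the state simplex `P(e₂)` at a point: since `e₂` is an
interior point of `C₂`, Hahn–Banach describes `C₂` as the set where all states are nonnegative, so
`M(y/e₂) = sup_ν ν y`, `m(y/e₂) = inf_π π y` and `‖y‖_H = sup_{ν,π} (ν y - π y)`. Because `T e₁`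
is a multiple of `e₂`, `ν ∘ T - π ∘ T` vanishes on `e₁`, and every `z` with `‖z‖_H ≤ 1` is a
translate of some `x ∈ [0,e₁]` along `e₁`; this gives the formula over `[0,e₁]`. The Thompson unit
ball is `2 • [0,e₁] - e₁`, so on functionals vanishing at `e₁` the dual Thompson norm is twice the
supremum over `[0,e₁]`. Finally `P(e₂) - P(e₂)` is weak-* compact and convex (Banach–Alaoglu), so by
Krein–Milman a weak-* continuous linear bound holding on its extreme points holds everywhere, and
an extreme point of `P(e₂) - P(e₂)` is a difference of two disjoint extreme states.
-/

open Set Filter Topology Pointwise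

theorem exists_pos_add_smul_mem {X : Type*} [AddCommGroup X] [Module ℝ X] [TopologicalSpace X]
    [ContinuousAdd X] [ContinuousSMul ℝ X] {C : Set X} {e : X} (he : e ∈ interior C) (y : X) :
    ∃ s : ℝ, 0 < s ∧ e + s • y ∈ C := by
  have hlim : Tendsto (fun s : ℝ => e + s • y) (𝓝[>] 0) (𝓝 e) := by
    have : Continuous fun s : ℝ => e + s • y := by fun_prop
    simpa using (this.tendsto 0).mono_left nhdsWithin_le_nhds
  exact (eventually_mem_nhdsWithin.and (hlim.eventually (mem_interior_iff_mem_nhds.1 he))).exists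

theorem setOf_add_mem_and_sub_mem_mem_nhds {X : Type*} [AddCommGroup X] [TopologicalSpace X]
    [IsTopologicalAddGroup X] {C : Set X} {e : X} (he : e ∈ interior C) :
    {w : X | e + w ∈ C ∧ e - w ∈ C} ∈ 𝓝 (0 : X) := by
  have hC : C ∈ 𝓝 e := mem_interior_iff_mem_nhds.1 he
  refine Filter.inter_mem ?_ ?_
  · exact (continuous_const.add continuous_id).continuousAt.preimage_mem_nhds (by simpa using hC)
  · exact (continuous_const.sub continuous_id).continuousAt.preimage_mem_nhds (by simpa using hC)

theorem lowSlope_eq_neg_upSlope_neg {X : Type*} [AddCommGroup X] [Module ℝ X] {C : Set X}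
    {e x : X} : lowSlope C e x = -upSlope C e (-x) := by
  have : {t : ℝ | x - t • e ∈ C} = -{t : ℝ | t • e - -x ∈ C} := by
    ext t; simp [sub_eq_add_neg, add_comm]
  rw [lowSlope, upSlope, this, Real.sSup_neg]

theorem mem_extremePoints_of_sub_mem_extremePoints {𝕜 E : Type*} [CommRing 𝕜] [PartialOrder 𝕜]
    [AddCommGroup E] [Module 𝕜 E] {s t : Set E} {x y : E} (hx : x ∈ s) (hy : y ∈ t)
    (h : x - y ∈ (s - t).extremePoints 𝕜) : x ∈ s.extremePoints 𝕜 ∧ y ∈ t.extremePoints 𝕜 := by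
  refine ⟨⟨hx, fun x₁ hx₁ x₂ hx₂ hseg => ?_⟩, ⟨hy, fun y₁ hy₁ y₂ hy₂ hseg => ?_⟩⟩
  · obtain ⟨a, b, ha, hb, hab, rfl⟩ := hseg
    refine sub_left_injective
      (h.2 (sub_mem_sub hx₁ hy) (sub_mem_sub hx₂ hy) ⟨a, b, ha, hb, hab, ?_⟩)
    linear_combination (norm := module) -hab • y
  · obtain ⟨a, b, ha, hb, hab, rfl⟩ := hseg
    refine sub_right_injective
      (h.2 (sub_mem_sub hx hy₁) (sub_mem_sub hx hy₂) ⟨a, b, ha, hb, hab, ?_⟩)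
    linear_combination (norm := module) hab • x

theorem IsCompact.subset_of_extremePoints_subset {E : Type*} [AddCommGroup E] [Module ℝ E]
    [TopologicalSpace E] [T2Space E] [IsTopologicalAddGroup E] [ContinuousSMul ℝ E]
    [LocallyConvexSpace ℝ E] {s t : Set E} (hs : IsCompact s) (hsc : Convex ℝ s)
    (htc : Convex ℝ t) (ht : IsClosed t) (h : s.extremePoints ℝ ⊆ t) : s ⊆ t :=
  closure_convexHull_extremePoints hs hsc ▸ closure_minimal (convexHull_min h htc) ht

theorem sSup_setOf_mul_sSup {ι : Type*} {p : ι → Prop} {S : ι → Set ℝ} {c : ℝ} (hc : 0 < c)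
    (hne : ∀ i, p i → (S i).Nonempty) (hbdd : BddAbove {r | ∃ i, p i ∧ r ∈ S i}) :
    sSup {r | ∃ i, p i ∧ r = c * sSup (S i)} = c * sSup {r | ∃ i, p i ∧ r ∈ S i} := by
  rcases isEmpty_or_nonempty {i // p i} with hp | ⟨⟨i₀, hi₀⟩⟩
  · have hp' : ∀ i, ¬ p i := fun i hi => hp.false ⟨i, hi⟩
    simp [hp']
  have hle : ∀ i, p i → sSup (S i) ≤ sSup {r | ∃ i, p i ∧ r ∈ S i} := fun i hi =>
    csSup_le (hne i hi) fun r hr => le_csSup hbdd ⟨i, hi, hr⟩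
  apply le_antisymm
  · refine csSup_le ⟨_, i₀, hi₀, rfl⟩ ?_
    rintro _ ⟨i, hi, rfl⟩
    exact mul_le_mul_of_nonneg_left (hle i hi) hc.le
  · have hbdd' : BddAbove {r | ∃ i, p i ∧ r = c * sSup (S i)} := by
      refine ⟨c * sSup {r | ∃ i, p i ∧ r ∈ S i}, ?_⟩
      rintro _ ⟨i, hi, rfl⟩
      exact mul_le_mul_of_nonneg_left (hle i hi) hc.le
    rw [← le_div_iff₀' hc]
    obtain ⟨r₀, hr₀⟩ := hne i₀ hi₀
    refine csSup_le ⟨r₀, i₀, hi₀, hr₀⟩ ?_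
    rintro r ⟨i, hi, hr⟩
    rw [le_div_iff₀' hc]
    have hSi : BddAbove (S i) := ⟨_, fun r hr => le_csSup hbdd ⟨i, hi, hr⟩⟩
    exact (mul_le_mul_of_nonneg_left (le_csSup hSi hr) hc.le).trans (le_csSup hbdd' ⟨i, hi, rfl⟩)

theorem IsNormalCone.isBounded_orderIntv {X : Type*} [NormedAddCommGroup X] [NormedSpace ℝ X]
    {C : Set X} (hn : IsNormalCone C) (e : X) : Bornology.IsBounded (orderIntv C e) := by
  obtain ⟨K, -, hK⟩ := hn
  exact isBounded_iff_forall_norm_le.2 ⟨K * ‖e‖, fun x hx => hK x e hx.1 hx.2⟩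

namespace IsCPCone

variable {X : Type*} [NormedAddCommGroup X] [NormedSpace ℝ X] {C : Set X} {e x y : X} {t : ℝ}

theorem add_mem (hC : IsCPCone C) (hx : x ∈ C) (hy : y ∈ C) : x + y ∈ C := hC.2.1 x hx y hy

theorem smul_mem (hC : IsCPCone C) (ht : 0 ≤ t) (hx : x ∈ C) : t • x ∈ C := hC.2.2.1 t ht x hx

theorem eq_zero_of_mem_of_neg_mem (hC : IsCPCone C) (hx : x ∈ C) (hx' : -x ∈ C) : x = 0 :=
  hC.2.2.2 x hx hx'

def toProperCone (hC : IsCPCone C) (he : e ∈ C) : ProperCone ℝ X where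
  carrier := C
  add_mem' := hC.add_mem
  zero_mem' := by simpa using hC.smul_mem le_rfl he
  smul_mem' c _ hx := hC.smul_mem c.2 hx
  isClosed' := hC.1

theorem zero_mem (hC : IsCPCone C) (he : e ∈ C) : (0 : X) ∈ C :=
  (hC.toProperCone he).zero_mem

theorem exists_smul_sub_mem (hC : IsCPCone C) (he : e ∈ interior C) (y : X) :
    ∃ t : ℝ, t • e - y ∈ C := by
  obtain ⟨s, hs, hsC⟩ := exists_pos_add_smul_mem he (-y)
  refine ⟨s⁻¹, ?_⟩
  simpa [smul_add, smul_smul, inv_mul_cancel₀ hs.ne', sub_eq_add_neg] using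
    hC.smul_mem (inv_nonneg.2 hs.le) hsC

theorem eq_zero_of_zero_mem_interior (hC : IsCPCone C) (h0 : (0 : X) ∈ interior C) (x : X) :
    x = 0 := by
  obtain ⟨_, hx⟩ := hC.exists_smul_sub_mem h0 (-x)
  obtain ⟨_, hx'⟩ := hC.exists_smul_sub_mem h0 x
  exact hC.eq_zero_of_mem_of_neg_mem (by simpa using hx) (by simpa using hx')

theorem smul_mem_iff (hC : IsCPCone C) (he : e ∈ C) (he0 : e ≠ 0) : t • e ∈ C ↔ 0 ≤ t := by
  refine ⟨fun h => ?_, fun ht => hC.smul_mem ht he⟩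
  by_contra! ht
  have h' : -(t • e) ∈ C := by simpa using hC.smul_mem (neg_nonneg.2 ht.le) he
  simpa [ht.ne, he0] using hC.eq_zero_of_mem_of_neg_mem h h'

end IsCPCone

section Cone

variable {X : Type*} [NormedAddCommGroup X] [NormedSpace ℝ X] {C : Set X} {e x : X} {t : ℝ}
  {ν π : X →L[ℝ] ℝ}

theorem zero_mem_orderIntv (hC : IsCPCone C) (he : e ∈ C) : (0 : X) ∈ orderIntv C e :=
  ⟨hC.zero_mem he, by simpa using he⟩

section Slopes

variable (hC : IsCPCone C) (he : e ∈ interior C) (he0 : e ≠ 0)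
include hC he he0

theorem smul_sub_mem_iff_upSlope_le : t • e - x ∈ C ↔ upSlope C e x ≤ t := by
  have hbdd : BddBelow {t : ℝ | t • e - x ∈ C} := by
    obtain ⟨s, hs⟩ := hC.exists_smul_sub_mem he (-x)
    refine ⟨-s, fun t ht => ?_⟩
    have : (t + s) • e ∈ C := by convert hC.add_mem ht hs using 1; module
    have := (hC.smul_mem_iff (interior_subset he) he0).1 this
    linarith
  refine ⟨fun h => csInf_le hbdd h, fun h => ?_⟩
  have hclosed : IsClosed {t : ℝ | t • e - x ∈ C} := hC.1.preimage (by fun_prop)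
  have hmem := hclosed.csInf_mem (hC.exists_smul_sub_mem he x) hbdd
  have hsplit : t • e - x = (upSlope C e x • e - x) + (t - upSlope C e x) • e := by module
  exact hsplit ▸ hC.add_mem hmem (hC.smul_mem (sub_nonneg.2 h) (interior_subset he))

theorem sub_smul_mem_iff_le_lowSlope : x - t • e ∈ C ↔ t ≤ lowSlope C e x := by
  rw [lowSlope_eq_neg_upSlope_neg, le_neg, ← smul_sub_mem_iff_upSlope_le hC he he0]
  simp [sub_eq_add_neg, add_comm]

theorem mem_orderIntv_iff : x ∈ orderIntv C e ↔ 0 ≤ lowSlope C e x ∧ upSlope C e x ≤ 1 := by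
  rw [← sub_smul_mem_iff_le_lowSlope hC he he0, ← smul_sub_mem_iff_upSlope_le hC he he0]
  simp [orderIntv]

theorem hopfOsc_le_one_of_mem_orderIntv (hx : x ∈ orderIntv C e) : hopfOsc C e x ≤ 1 := by
  have := (mem_orderIntv_iff hC he he0).1 hx
  unfold hopfOsc; linarith

theorem sub_lowSlope_smul_mem_orderIntv (hx : hopfOsc C e x ≤ 1) :
    x - lowSlope C e x • e ∈ orderIntv C e := by
  refine ⟨(sub_smul_mem_iff_le_lowSlope hC he he0).2 le_rfl, ?_⟩
  have : (1 + lowSlope C e x) • e - x ∈ C := by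
    rw [smul_sub_mem_iff_upSlope_le hC he he0]; unfold hopfOsc at hx; linarith
  convert this using 1; module

theorem thompsonNorm_le_one_iff : thompsonNorm C e x ≤ 1 ↔ e - x ∈ C ∧ e + x ∈ C := by
  have h₁ : e - x ∈ C ↔ upSlope C e x ≤ 1 := by
    rw [← smul_sub_mem_iff_upSlope_le hC he he0, one_smul]
  have h₂ : e + x ∈ C ↔ -1 ≤ lowSlope C e x := by
    rw [← sub_smul_mem_iff_le_lowSlope hC he he0, neg_smul, one_smul, sub_neg_eq_add, add_comm]
  rw [h₁, h₂, thompsonNorm, max_le_iff, neg_le]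

end Slopes

theorem hopfOsc_zero (hC : IsCPCone C) (he : e ∈ interior C) : hopfOsc C e 0 = 0 := by
  have hup : upSlope C e 0 = 0 := by
    rcases eq_or_ne e 0 with rfl | he0
    -- For `e = 0` the defining set is all of `ℝ`, whose `sInf` is `0` by convention.
    · simp [upSlope, hC.zero_mem (interior_subset he)]
    · have h := (smul_sub_mem_iff_upSlope_le hC he he0 (x := 0) (t := upSlope C e 0)).2 le_rfl
      refine le_antisymm ((smul_sub_mem_iff_upSlope_le hC he he0).1 ?_) ?_
      · simpa using hC.zero_mem (interior_subset he)
      · simpa [hC.smul_mem_iff (interior_subset he) he0] using h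
  rw [hopfOsc, lowSlope_eq_neg_upSlope_neg, neg_zero, hup, neg_zero, sub_zero]

theorem dualTNorm_eq_two_mul_sSup (hC : IsCPCone C) (he : e ∈ interior C) (he0 : e ≠ 0)
    {μ : X →L[ℝ] ℝ} (hμ : μ e = 0) :
    dualTNorm C e μ = 2 * sSup {r | ∃ x ∈ orderIntv C e, r = μ x} := by
  -- `x ↦ 2 • x - e` maps `[0, e]` onto the unit ball of Thompson's norm.
  have hset : {r | ∃ x, thompsonNorm C e x ≤ 1 ∧ r = μ x} =
      (2 : ℝ) • {r | ∃ x ∈ orderIntv C e, r = μ x} := by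
    ext r
    simp only [mem_ofPred_eq, mem_smul_set, thompsonNorm_le_one_iff hC he he0]
    constructor
    · rintro ⟨x, ⟨hx₁, hx₂⟩, rfl⟩
      refine ⟨μ ((2 : ℝ)⁻¹ • (x + e)), ⟨_, ⟨?_, ?_⟩, rfl⟩, by simp [hμ]⟩
      · convert hC.smul_mem (by norm_num : (0 : ℝ) ≤ 2⁻¹) hx₂ using 1; module
      · convert hC.smul_mem (by norm_num : (0 : ℝ) ≤ 2⁻¹) hx₁ using 1; module
    · rintro ⟨_, ⟨y, ⟨hy₁, hy₂⟩, rfl⟩, rfl⟩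
      refine ⟨(2 : ℝ) • y - e, ⟨?_, ?_⟩, by simp [hμ]⟩
      · convert hC.smul_mem (by norm_num : (0 : ℝ) ≤ 2) hy₂ using 1; module
      · convert hC.smul_mem (by norm_num : (0 : ℝ) ≤ 2) hy₁ using 1; module
  rw [dualTNorm, hset, Real.sSup_smul_of_nonneg (by norm_num), smul_eq_mul]

section Simplex

theorem apply_smul_of_mem_simplexSet (hν : ν ∈ simplexSet C e) (a : ℝ) : ν (a • e) = a := by
  simp [hν.2]

variable (hC : IsCPCone C) (he : e ∈ interior C)
include hC he

theorem exists_mem_simplexSet_apply_neg {p : X} (hp : p ∉ C) : ∃ ν ∈ simplexSet C e, ν p < 0 := by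
  obtain ⟨f, hf, hfp⟩ := (hC.toProperCone (interior_subset he)).hyperplane_separation_point hp
  obtain ⟨s, hs, hsp⟩ := exists_pos_add_smul_mem he p
  -- `f` is positive at the interior point `e`, since `e + s • p ∈ C` and `f p < 0`.
  have hfe : 0 < f e := by
    have := hf _ hsp
    rw [map_add, map_smul, smul_eq_mul] at this
    nlinarith
  refine ⟨(f e)⁻¹ • f, ⟨fun x hx => ?_, ?_⟩, ?_⟩
  · simpa using mul_nonneg (inv_nonneg.2 hfe.le) (hf x hx)
  · simp [hfe.ne']
  · simpa using mul_neg_of_pos_of_neg (inv_pos.2 hfe) hfp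

theorem mem_iff_forall_simplexSet_nonneg : x ∈ C ↔ ∀ ν ∈ simplexSet C e, 0 ≤ ν x := by
  refine ⟨fun hx ν hν => hν.1 x hx, fun h => ?_⟩
  by_contra hx
  obtain ⟨ν, hν, hνx⟩ := exists_mem_simplexSet_apply_neg hC he hx
  exact (h ν hν).not_gt hνx

theorem simplexSet_nonempty (he0 : e ≠ 0) : (simplexSet C e).Nonempty := by
  by_contra hP
  have : -e ∈ C := (mem_iff_forall_simplexSet_nonneg hC he).2 fun ν hν => (hP ⟨ν, hν⟩).elim
  exact he0 (hC.eq_zero_of_mem_of_neg_mem (interior_subset he) this)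

theorem upSlope_le_iff_forall_simplexSet (he0 : e ≠ 0) :
    upSlope C e x ≤ t ↔ ∀ ν ∈ simplexSet C e, ν x ≤ t := by
  rw [← smul_sub_mem_iff_upSlope_le hC he he0, mem_iff_forall_simplexSet_nonneg hC he]
  refine forall₂_congr fun ν hν => ?_
  rw [map_sub, apply_smul_of_mem_simplexSet hν, sub_nonneg]

theorem le_lowSlope_iff_forall_simplexSet (he0 : e ≠ 0) :
    t ≤ lowSlope C e x ↔ ∀ ν ∈ simplexSet C e, t ≤ ν x := by
  rw [← sub_smul_mem_iff_le_lowSlope hC he he0, mem_iff_forall_simplexSet_nonneg hC he]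
  refine forall₂_congr fun ν hν => ?_
  rw [map_sub, apply_smul_of_mem_simplexSet hν, sub_nonneg]

theorem hopfOsc_le_iff_forall_simplexSet (he0 : e ≠ 0) {b : ℝ} :
    hopfOsc C e x ≤ b ↔ ∀ ν ∈ simplexSet C e, ∀ π ∈ simplexSet C e, ν x - π x ≤ b := by
  rw [hopfOsc, sub_le_iff_le_add, ← sub_le_iff_le_add', le_lowSlope_iff_forall_simplexSet hC he he0,
    forall₂_comm]
  refine forall₂_congr fun π hπ => ?_
  rw [sub_le_iff_le_add', upSlope_le_iff_forall_simplexSet hC he he0]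
  exact forall₂_congr fun ν hν => sub_le_iff_le_add.symm

end Simplex

theorem simplexSet_subset_polar :
    simplexSet C e ⊆ StrongDual.polar ℝ {w : X | e + w ∈ C ∧ e - w ∈ C} := by
  intro ν hν
  rw [StrongDual.mem_polar_iff]
  rintro w ⟨hw₁, hw₂⟩
  have h₁ := hν.1 _ hw₁
  have h₂ := hν.1 _ hw₂
  rw [map_add, hν.2] at h₁
  rw [map_sub, hν.2] at h₂
  rw [Real.norm_eq_abs, abs_le]
  constructor <;> linarith

theorem isBounded_simplexSet (he : e ∈ interior C) : Bornology.IsBounded (simplexSet C e) :=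
  (NormedSpace.isBounded_polar_of_mem_nhds_zero ℝ
    (setOf_add_mem_and_sub_mem_mem_nhds he)).subset simplexSet_subset_polar

theorem isCompact_toStrongDual_preimage_simplexSet (he : e ∈ interior C) :
    IsCompact (WeakDual.toStrongDual ⁻¹' simplexSet C e) := by
  refine WeakDual.isCompact_of_bounded_of_closed
    (WeakDual.isBounded_toStrongDual_preimage_iff_isBounded.2 (isBounded_simplexSet he)) ?_
  have hdual : IsClosed {μ : WeakDual ℝ X | ∀ x ∈ C, 0 ≤ μ x} := by
    simp only [ofPred_forall]
    exact isClosed_biInter fun x _ => isClosed_le continuous_const (WeakDual.eval_continuous x)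
  exact hdual.inter (isClosed_eq (WeakDual.eval_continuous e) continuous_const)

theorem convex_simplexSet : Convex ℝ (simplexSet C e) := by
  rintro ν ⟨hν, hν₁⟩ π ⟨hπ, hπ₁⟩ a b ha hb hab
  refine ⟨fun x hx => ?_, by simp [hν₁, hπ₁, hab]⟩
  simpa using add_nonneg (mul_nonneg ha (hν x hx)) (mul_nonneg hb (hπ x hx))

theorem disjointIn_of_sub_mem_extremePoints (hν : ν ∈ simplexSet C e) (hπ : π ∈ simplexSet C e)
    (h : ν - π ∈ (simplexSet C e - simplexSet C e).extremePoints ℝ) : disjointIn C e ν π := by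
  intro ρ hρ hρν hρπ
  have reflect : ∀ κ ∈ simplexSet C e, ρ - (2:ℝ)⁻¹ • κ ∈ dualCone C →
      (2:ℝ) • ρ - κ ∈ simplexSet C e := fun κ hκ hρκ => by
    refine ⟨fun x hx => ?_, by simp [hρ.2, hκ.2]; norm_num⟩
    have := hρκ x hx
    simp only [sub_apply, smul_apply, smul_eq_mul] at this ⊢
    linarith
  -- `ν - π` is the midpoint of `ν - (2ρ - ν)` and `(2ρ - π) - π`, both in `P - P`.
  have hmid := h.2 (sub_mem_sub hν (reflect ν hν hρν)) (sub_mem_sub (reflect π hπ hρπ) hπ)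
    ⟨2⁻¹, 2⁻¹, by norm_num, by norm_num, by norm_num, by module⟩
  have : (2:ℝ) • ρ - ν = π := sub_right_injective hmid
  rw [← this]
  module

theorem sub_apply_le_of_forall_extremePoints (he : e ∈ interior C) {y : X} {b : ℝ}
    (h : ∀ ν ∈ (simplexSet C e).extremePoints ℝ, ∀ π ∈ (simplexSet C e).extremePoints ℝ,
      disjointIn C e ν π → ν y - π y ≤ b)
    (hν : ν ∈ simplexSet C e) (hπ : π ∈ simplexSet C e) : ν y - π y ≤ b := by
  have : LocallyConvexSpace ℝ (WeakDual ℝ X) := WeakBilin.locallyConvexSpace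
  set P := WeakDual.toStrongDual ⁻¹' simplexSet C e
  have hP : IsCompact P := isCompact_toStrongDual_preimage_simplexSet he
  have hPc : Convex ℝ P := convex_simplexSet.linear_preimage WeakDual.toStrongDual.toLinearMap
  have hsub : P - P ⊆ {μ | μ y ≤ b} := by
    refine (sub_eq_add_neg P P ▸ hP.add hP.neg).subset_of_extremePoints_subset (hPc.sub hPc)
      (convex_halfSpace_le ⟨fun _ _ => rfl, fun _ _ => rfl⟩ b)
      (isClosed_le (WeakDual.eval_continuous y) continuous_const) ?_
    intro μ hμ
    obtain ⟨ν', hν', π', hπ', rfl⟩ := extremePoints_subset hμ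
    obtain ⟨hν'ext, hπ'ext⟩ := mem_extremePoints_of_sub_mem_extremePoints hν' hπ' hμ
    exact h ν' hν'ext π' hπ'ext (disjointIn_of_sub_mem_extremePoints hν' hπ' hμ)
  exact hsub (sub_mem_sub (s := P) hν hπ)

theorem sSup_sub_apply_eq_sSup_extremePoints {α : Type*} (hC : IsCPCone C) (he : e ∈ interior C)
    (he0 : e ≠ 0) (f : α → X) {s : Set α} (hs : s.Nonempty)
    (hbdd : BddAbove {r | ∃ ν ∈ simplexSet C e, ∃ π ∈ simplexSet C e, ∃ a ∈ s,
      r = ν (f a) - π (f a)}) :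
    sSup {r | ∃ ν ∈ simplexSet C e, ∃ π ∈ simplexSet C e, ∃ a ∈ s, r = ν (f a) - π (f a)} =
      sSup {r | ∃ ν ∈ (simplexSet C e).extremePoints ℝ, ∃ π ∈ (simplexSet C e).extremePoints ℝ,
        disjointIn C e ν π ∧ ∃ a ∈ s, r = ν (f a) - π (f a)} := by
  obtain ⟨ν₀, hν₀⟩ := simplexSet_nonempty hC he he0
  obtain ⟨a₀, ha₀⟩ := hs
  have h0 : (0 : ℝ) ∈ {r | ∃ ν ∈ simplexSet C e, ∃ π ∈ simplexSet C e, ∃ a ∈ s,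
      r = ν (f a) - π (f a)} := ⟨ν₀, hν₀, ν₀, hν₀, a₀, ha₀, (sub_self _).symm⟩
  have hsub : {r | ∃ ν ∈ (simplexSet C e).extremePoints ℝ, ∃ π ∈ (simplexSet C e).extremePoints ℝ,
      disjointIn C e ν π ∧ ∃ a ∈ s, r = ν (f a) - π (f a)} ⊆
      {r | ∃ ν ∈ simplexSet C e, ∃ π ∈ simplexSet C e, ∃ a ∈ s, r = ν (f a) - π (f a)} := by
    rintro _ ⟨ν, hν, π, hπ, -, a, ha, rfl⟩
    exact ⟨ν, hν.1, π, hπ.1, a, ha, rfl⟩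
  apply le_antisymm
  · refine csSup_le ⟨0, h0⟩ ?_
    rintro _ ⟨ν, hν, π, hπ, a, ha, rfl⟩
    exact sub_apply_le_of_forall_extremePoints he (fun ν' hν' π' hπ' hd =>
      le_csSup (hbdd.mono hsub) ⟨ν', hν', π', hπ', hd, a, ha, rfl⟩) hν hπ
  · exact Real.sSup_le (fun r hr => le_csSup hbdd (hsub hr)) (le_csSup hbdd h0)

end Cone

theorem bddAbove_sub_apply {X₁ X₂ : Type*} [NormedAddCommGroup X₁] [NormedSpace ℝ X₁]
    [NormedAddCommGroup X₂] [NormedSpace ℝ X₂] {C₁ : Set X₁} {C₂ : Set X₂} {e₂ : X₂}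
    (hn₁ : IsNormalCone C₁) (e₁ : X₁) (he₂ : e₂ ∈ interior C₂) (T : X₁ →L[ℝ] X₂) :
    BddAbove {r | ∃ ν ∈ simplexSet C₂ e₂, ∃ π ∈ simplexSet C₂ e₂,
      ∃ x ∈ orderIntv C₁ e₁, r = ν (T x) - π (T x)} := by
  obtain ⟨R₁, hR₁⟩ := isBounded_iff_forall_norm_le.1 (hn₁.isBounded_orderIntv e₁)
  obtain ⟨R₂, hR₂⟩ := isBounded_iff_forall_norm_le.1 (isBounded_simplexSet he₂)
  have key : ∀ ν ∈ simplexSet C₂ e₂, ∀ x ∈ orderIntv C₁ e₁, |ν (T x)| ≤ R₂ * (‖T‖ * R₁) :=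
    fun ν hν x hx => calc
      |ν (T x)| ≤ ‖ν‖ * ‖T x‖ := ν.le_opNorm _
      _ ≤ R₂ * (‖T‖ * R₁) := mul_le_mul (hR₂ ν hν) (T.le_opNorm_of_le (hR₁ x hx)) (norm_nonneg _)
          ((norm_nonneg ν).trans (hR₂ ν hν))
  refine ⟨2 * (R₂ * (‖T‖ * R₁)), ?_⟩
  rintro _ ⟨ν, hν, π, hπ, x, hx, rfl⟩
  linarith [abs_le.1 (key ν hν x hx), abs_le.1 (key π hπ x hx)]

section Dobrushin

variable {X₁ X₂ : Type*} [NormedAddCommGroup X₁] [NormedSpace ℝ X₁] [NormedAddCommGroup X₂]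
  [NormedSpace ℝ X₂] {C₁ : Set X₁} {e₁ : X₁} {C₂ : Set X₂} {e₂ : X₂} {T : X₁ →L[ℝ] X₂}

theorem half_mul_sSup_dualTNorm_eq (hC₁ : IsCPCone C₁) (he₁ : e₁ ∈ interior C₁) (he₁0 : e₁ ≠ 0)
    (hTe : ∃ c : ℝ, T e₁ = c • e₂) (Q : (X₂ →L[ℝ] ℝ) × (X₂ →L[ℝ] ℝ) → Prop)
    (hQ : ∀ p, Q p → p.1 ∈ simplexSet C₂ e₂ ∧ p.2 ∈ simplexSet C₂ e₂)
    (hbdd : BddAbove {r | ∃ ν ∈ simplexSet C₂ e₂, ∃ π ∈ simplexSet C₂ e₂,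
      ∃ x ∈ orderIntv C₁ e₁, r = ν (T x) - π (T x)}) :
    (1 / 2) * sSup {r | ∃ p, Q p ∧ r = dualTNorm C₁ e₁ (p.1.comp T - p.2.comp T)} =
      sSup {r | ∃ p, Q p ∧ ∃ x ∈ orderIntv C₁ e₁, r = p.1 (T x) - p.2 (T x)} := by
  obtain ⟨c, hc⟩ := hTe
  have hdual : ∀ p, Q p → dualTNorm C₁ e₁ (p.1.comp T - p.2.comp T) =
      2 * sSup {r | ∃ x ∈ orderIntv C₁ e₁, r = p.1 (T x) - p.2 (T x)} := fun p hp =>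
    dualTNorm_eq_two_mul_sSup hC₁ he₁ he₁0 (by simp [hc, (hQ p hp).1.2, (hQ p hp).2.2])
  have hset : {r | ∃ p, Q p ∧ r = dualTNorm C₁ e₁ (p.1.comp T - p.2.comp T)} =
      {r | ∃ p, Q p ∧ r = 2 * sSup {r | ∃ x ∈ orderIntv C₁ e₁, r = p.1 (T x) - p.2 (T x)}} := by
    ext r
    exact exists_congr fun p => and_congr_right fun hp => by rw [hdual p hp]
  have hbddQ : BddAbove {r | ∃ p, Q p ∧ ∃ x ∈ orderIntv C₁ e₁, r = p.1 (T x) - p.2 (T x)} := by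
    refine hbdd.mono ?_
    rintro _ ⟨p, hp, x, hx, rfl⟩
    exact ⟨p.1, (hQ p hp).1, p.2, (hQ p hp).2, x, hx, rfl⟩
  rw [hset, sSup_setOf_mul_sSup (p := Q)
    (S := fun p => {r | ∃ x ∈ orderIntv C₁ e₁, r = p.1 (T x) - p.2 (T x)}) two_pos
    (fun p _ => ⟨_, 0, zero_mem_orderIntv hC₁ (interior_subset he₁), rfl⟩) hbddQ,
    one_div, inv_mul_cancel_left₀ two_ne_zero]
  rfl

theorem opHNorm_eq_sSup_sub_apply (hC₁ : IsCPCone C₁) (he₁ : e₁ ∈ interior C₁) (he₁0 : e₁ ≠ 0)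
    (hC₂ : IsCPCone C₂) (he₂ : e₂ ∈ interior C₂) (he₂0 : e₂ ≠ 0) (hTe : ∃ c : ℝ, T e₁ = c • e₂)
    (hbdd : BddAbove {r | ∃ ν ∈ simplexSet C₂ e₂, ∃ π ∈ simplexSet C₂ e₂,
      ∃ x ∈ orderIntv C₁ e₁, r = ν (T x) - π (T x)}) :
    opHNorm C₁ e₁ C₂ e₂ T = sSup {r | ∃ ν ∈ simplexSet C₂ e₂, ∃ π ∈ simplexSet C₂ e₂,
      ∃ x ∈ orderIntv C₁ e₁, r = ν (T x) - π (T x)} := by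
  obtain ⟨c, hc⟩ := hTe
  obtain ⟨ν₀, hν₀⟩ := simplexSet_nonempty hC₂ he₂ he₂0
  have h0 : (0 : ℝ) ∈ {r | ∃ ν ∈ simplexSet C₂ e₂, ∃ π ∈ simplexSet C₂ e₂,
      ∃ x ∈ orderIntv C₁ e₁, r = ν (T x) - π (T x)} :=
    ⟨ν₀, hν₀, ν₀, hν₀, 0, zero_mem_orderIntv hC₁ (interior_subset he₁), (sub_self _).symm⟩
  have hH : ∀ z, hopfOsc C₁ e₁ z ≤ 1 → hopfOsc C₂ e₂ (T z) ≤ sSup {r | ∃ ν ∈ simplexSet C₂ e₂,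
      ∃ π ∈ simplexSet C₂ e₂, ∃ x ∈ orderIntv C₁ e₁, r = ν (T x) - π (T x)} := by
    intro z hz
    rw [hopfOsc_le_iff_forall_simplexSet hC₂ he₂ he₂0]
    intro ν hν π hπ
    -- Shifting `z` along `e₁` moves it into `[0, e₁]` and leaves `ν ∘ T - π ∘ T` unchanged.
    have hshift : ν (T z) - π (T z) = ν (T (z - lowSlope C₁ e₁ z • e₁)) -
        π (T (z - lowSlope C₁ e₁ z • e₁)) := by
      simp only [map_sub, map_smul, hc, smul_smul, apply_smul_of_mem_simplexSet hν,
        apply_smul_of_mem_simplexSet hπ]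
      ring
    exact hshift ▸ le_csSup hbdd
      ⟨ν, hν, π, hπ, _, sub_lowSlope_smul_mem_orderIntv hC₁ he₁ he₁0 hz, rfl⟩
  have hHbdd : BddAbove {r | ∃ z, hopfOsc C₁ e₁ z ≤ 1 ∧ r = hopfOsc C₂ e₂ (T z)} :=
    ⟨_, fun _ ⟨z, hz, hr⟩ => hr ▸ hH z hz⟩
  apply le_antisymm
  · exact Real.sSup_le (fun _ ⟨z, hz, hr⟩ => hr ▸ hH z hz) (le_csSup hbdd h0)
  · refine csSup_le ⟨0, h0⟩ ?_
    rintro _ ⟨ν, hν, π, hπ, x, hx, rfl⟩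
    calc ν (T x) - π (T x) ≤ hopfOsc C₂ e₂ (T x) :=
          (hopfOsc_le_iff_forall_simplexSet hC₂ he₂ he₂0).1 le_rfl ν hν π hπ
      _ ≤ opHNorm C₁ e₁ C₂ e₂ T :=
          le_csSup hHbdd ⟨x, hopfOsc_le_one_of_mem_orderIntv hC₁ he₁ he₁0 hx, rfl⟩

end Dobrushin

theorem opHNorm_eq_abstract_dobrushin_general
    {X₁ : Type*} [NormedAddCommGroup X₁] [NormedSpace ℝ X₁]
    {X₂ : Type*} [NormedAddCommGroup X₂] [NormedSpace ℝ X₂]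
    (C₁ : Set X₁) (e₁ : X₁) (C₂ : Set X₂) (e₂ : X₂)
    (hC₁ : IsCPCone C₁) (hn₁ : IsNormalCone C₁) (he₁ : e₁ ∈ interior C₁)
    (hC₂ : IsCPCone C₂) (he₂ : e₂ ∈ interior C₂)
    (T : X₁ →L[ℝ] X₂) (hTe : ∃ c : ℝ, T e₁ = c • e₂) :
    opHNorm C₁ e₁ C₂ e₂ T =
        (1 / 2) * sSup {r : ℝ | ∃ ν ∈ simplexSet C₂ e₂, ∃ π ∈ simplexSet C₂ e₂,
          r = dualTNorm C₁ e₁ (ν.comp T - π.comp T)} ∧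
      opHNorm C₁ e₁ C₂ e₂ T =
        sSup {r : ℝ | ∃ ν ∈ simplexSet C₂ e₂, ∃ π ∈ simplexSet C₂ e₂,
          ∃ x ∈ orderIntv C₁ e₁, r = ν (T x) - π (T x)} ∧
      opHNorm C₁ e₁ C₂ e₂ T =
        (1 / 2) * sSup {r : ℝ | ∃ ν ∈ Set.extremePoints ℝ (simplexSet C₂ e₂),
          ∃ π ∈ Set.extremePoints ℝ (simplexSet C₂ e₂), disjointIn C₂ e₂ ν π ∧
            r = dualTNorm C₁ e₁ (ν.comp T - π.comp T)} ∧
      opHNorm C₁ e₁ C₂ e₂ T =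
        sSup {r : ℝ | ∃ ν ∈ Set.extremePoints ℝ (simplexSet C₂ e₂),
          ∃ π ∈ Set.extremePoints ℝ (simplexSet C₂ e₂), disjointIn C₂ e₂ ν π ∧
            ∃ x ∈ orderIntv C₁ e₁, r = ν (T x) - π (T x)} := by
  rcases eq_or_ne T 0 with rfl | hT
  · have hsSup : ∀ {S : Set ℝ}, (∀ r ∈ S, r = 0) → sSup S = 0 := fun h =>
      le_antisymm (Real.sSup_nonpos fun r hr => (h r hr).le)
        (Real.sSup_nonneg fun r hr => (h r hr).ge)
    have hop : opHNorm C₁ e₁ C₂ e₂ 0 = 0 :=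
      hsSup (by rintro _ ⟨z, -, rfl⟩; simpa using hopfOsc_zero hC₂ he₂)
    have hdual : dualTNorm C₁ e₁ 0 = 0 := hsSup (by rintro _ ⟨x, -, rfl⟩; rfl)
    simp only [hop, ContinuousLinearMap.comp_zero, sub_self, hdual, zero_apply, map_zero]
    refine ⟨?_, ?_, ?_, ?_⟩ <;> rw [hsSup (by simp)] <;> norm_num
  obtain ⟨z, hz⟩ : ∃ z, T z ≠ 0 := by
    by_contra! h
    exact hT (ContinuousLinearMap.ext h)
  have he₁0 : e₁ ≠ 0 := by
    rintro rfl
    exact hz (by rw [hC₁.eq_zero_of_zero_mem_interior he₁ z, map_zero])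
  have he₂0 : e₂ ≠ 0 := by
    rintro rfl
    exact hz (hC₂.eq_zero_of_zero_mem_interior he₂ _)
  have hbdd := bddAbove_sub_apply hn₁ e₁ he₂ T
  have h2 := opHNorm_eq_sSup_sub_apply hC₁ he₁ he₁0 hC₂ he₂ he₂0 hTe hbdd
  have h4 := h2.trans (sSup_sub_apply_eq_sSup_extremePoints hC₂ he₂ he₂0 T
    ⟨0, zero_mem_orderIntv hC₁ (interior_subset he₁)⟩ hbdd)
  have h1 := half_mul_sSup_dualTNorm_eq hC₁ he₁ he₁0 hTe
    (fun p => p.1 ∈ simplexSet C₂ e₂ ∧ p.2 ∈ simplexSet C₂ e₂) (fun _ => id) hbdd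
  have h3 := half_mul_sSup_dualTNorm_eq hC₁ he₁ he₁0 hTe
    (fun p => p.1 ∈ (simplexSet C₂ e₂).extremePoints ℝ ∧ p.2 ∈ (simplexSet C₂ e₂).extremePoints ℝ ∧
      disjointIn C₂ e₂ p.1 p.2) (fun _ hp => ⟨hp.1.1, hp.2.1.1⟩) hbdd
  simp only [Prod.exists, and_assoc, exists_and_left] at h1 h3
  exact ⟨h2.trans h1.symm, h2, h4.trans h3.symm, h4⟩

theorem opHNorm_eq_abstract_dobrushin
    {X₁ : Type*} [NormedAddCommGroup X₁] [NormedSpace ℝ X₁] [CompleteSpace X₁]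
    {X₂ : Type*} [NormedAddCommGroup X₂] [NormedSpace ℝ X₂] [CompleteSpace X₂]
    (C₁ : Set X₁) (e₁ : X₁) (C₂ : Set X₂) (e₂ : X₂)
    (hC₁ : IsCPCone C₁) (hn₁ : IsNormalCone C₁) (he₁ : e₁ ∈ interior C₁)
    (hC₂ : IsCPCone C₂) (hn₂ : IsNormalCone C₂) (he₂ : e₂ ∈ interior C₂)
    (T : X₁ →L[ℝ] X₂) (hTe : ∃ c : ℝ, T e₁ = c • e₂) :
    opHNorm C₁ e₁ C₂ e₂ T =
        (1 / 2) * sSup {r : ℝ | ∃ ν ∈ simplexSet C₂ e₂, ∃ π ∈ simplexSet C₂ e₂,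
          r = dualTNorm C₁ e₁ (ν.comp T - π.comp T)} ∧
      opHNorm C₁ e₁ C₂ e₂ T =
        sSup {r : ℝ | ∃ ν ∈ simplexSet C₂ e₂, ∃ π ∈ simplexSet C₂ e₂,
          ∃ x ∈ orderIntv C₁ e₁, r = ν (T x) - π (T x)} ∧
      opHNorm C₁ e₁ C₂ e₂ T =
        (1 / 2) * sSup {r : ℝ | ∃ ν ∈ Set.extremePoints ℝ (simplexSet C₂ e₂),
          ∃ π ∈ Set.extremePoints ℝ (simplexSet C₂ e₂), disjointIn C₂ e₂ ν π ∧
            r = dualTNorm C₁ e₁ (ν.comp T - π.comp T)} ∧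
      opHNorm C₁ e₁ C₂ e₂ T =
        sSup {r : ℝ | ∃ ν ∈ Set.extremePoints ℝ (simplexSet C₂ e₂),
          ∃ π ∈ Set.extremePoints ℝ (simplexSet C₂ e₂), disjointIn C₂ e₂ ν π ∧
            ∃ x ∈ orderIntv C₁ e₁, r = ν (T x) - π (T x)} :=
  opHNorm_eq_abstract_dobrushin_general C₁ e₁ C₂ e₂ hC₁ hn₁ he₁ hC₂ he₂ T hTe
end

section
/- Let A be a real n×n matrix with A𝟙 = 0, where 𝟙 = (1,…,1)ᵀ. Then the least constant α ∈ ℝ such that Δ(exp(tA)x) ≤ e^{αt}Δ(x) for all t ≥ 0 and all x ∈ ℝⁿ is h(A) = −min_{i≠j} (A_{ji} + A_{ij} + Σ_{k∉{i,j}} min(A_{ik}, A_{jk})). -/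
noncomputable section

/-- The diameter seminorm `Δ(x) = max_{i,j} (x_i - x_j)` on `ℝⁿ`. -/
def diamSemi (n : ℕ) (x : Fin n → ℝ) : ℝ :=
  sSup {r : ℝ | ∃ i j : Fin n, r = x i - x j}

end

/-!
Write `c i j = A j i + A i j + ∑_{k ∉ {i, j}} min (A i k) (A j k)` (`Matrix.pairOverlap`) and
`h = -min_{i ≠ j} c i j`. Along `y t = exp (t A) x`, a pair `(i, j)` realising `Δ (y t)` has
`y_i` maximal and `y_j` minimal; as the rows of `A` sum to zero,
`(A y)_i - (A y)_j = ∑_k (A_ik (y_k - y_i) - A_jk (y_k - y_j)) ≤ -c i j · Δ (y)`,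
so the right Dini derivative of `t ↦ Δ (y t)` is at most `h · Δ (y t)` and Gronwall's inequality
gives `Δ (y t) ≤ e^{h t} Δ (x)`. Conversely, for `x` with `x_i = 1`, `x_j = 0` and, for other `k`,
`x_k = 1` exactly when `A_jk ≤ A_ik`, we have `Δ (x) = 1` and `(A x)_i - (A x)_j = -c i j`;
comparing `y_i - y_j` with `e^{α t}` at `t = 0` forces `-c i j ≤ α`.
-/

open Filter Topology NormedSpace Finset
open scoped Matrix

theorem eventually_slope_finset_sup'_lt {ι : Type*} {s : Finset ι} (hs : s.Nonempty)
    {g : ι → ℝ → ℝ} {g' : ι → ℝ} {t r : ℝ} (hg : ∀ i ∈ s, HasDerivAt (g i) (g' i) t)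
    (hr : ∀ i ∈ s, g i t = s.sup' hs (g · t) → g' i < r) :
    ∀ᶠ z in 𝓝[>] t, (z - t)⁻¹ * (s.sup' hs (g · z) - s.sup' hs (g · t)) < r := by
  set M := s.sup' hs (g · t)
  have hterm : ∀ i ∈ s, ∀ᶠ z in 𝓝[>] t, g i z < M + r * (z - t) := by
    intro i hi
    rcases (le_sup' (g · t) hi).eq_or_lt with hactive | hinactive
    · have hslope : Tendsto (slope (g i) t) (𝓝[>] t) (𝓝 (g' i)) :=
        (hasDerivAt_iff_tendsto_slope.1 (hg i hi)).mono_left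
          (nhdsWithin_mono t fun z hz => ne_of_gt hz)
      filter_upwards [hslope.eventually_lt_const (hr i hi hactive), self_mem_nhdsWithin]
        with z hz hzt
      rw [slope_def_field, div_lt_iff₀ (sub_pos.2 hzt), hactive] at hz
      linarith
    · -- an inactive index stays strictly below `M` for a while, by continuity alone
      have hcont : ContinuousAt (fun z => M + r * (z - t)) t := by fun_prop
      exact nhdsWithin_le_nhds <|
        (hg i hi).continuousAt.eventually_lt hcont (by simpa using hinactive)
  filter_upwards [(eventually_all_finset s).2 hterm, self_mem_nhdsWithin] with z hz hzt
  rw [inv_mul_lt_iff₀ (sub_pos.2 hzt), sub_lt_iff_lt_add', mul_comm, sup'_lt_iff]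
  exact hz

theorem le_of_hasDerivAt_of_le_right {f g : ℝ → ℝ} {f' g' a : ℝ} (hf : HasDerivAt f f' a)
    (hg : HasDerivAt g g' a) (ha : f a = g a) (hle : ∀ z, a < z → f z ≤ g z) : f' ≤ g' := by
  have hright : 𝓝[>] a ≤ 𝓝[≠] a := nhdsWithin_mono a fun z hz => ne_of_gt hz
  refine le_of_tendsto_of_tendsto ((hasDerivAt_iff_tendsto_slope.1 hf).mono_left hright)
    ((hasDerivAt_iff_tendsto_slope.1 hg).mono_left hright) ?_
  filter_upwards [self_mem_nhdsWithin] with z (hz : a < z)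
  rw [slope_def_field, slope_def_field, ha]
  gcongr
  exact hle z hz

theorem mul_sub_mul_le_neg_min_mul {a b u v : ℝ} (hu : u ≤ 0) (hv : 0 ≤ v) :
    a * u - b * v ≤ -min a b * (v - u) := by
  rcases le_total a b with hab | hba
  · rw [min_eq_left hab]; nlinarith
  · rw [min_eq_right hba]; nlinarith

section MatrixExp

attribute [local instance] Matrix.linftyOpNormedRing Matrix.linftyOpNormedAlgebra

theorem hasDerivAt_exp_smul_mulVec {ι : Type*} [Fintype ι] [DecidableEq ι]
    (A : Matrix ι ι ℝ) (x : ι → ℝ) (t : ℝ) :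
    HasDerivAt (fun s : ℝ => exp (s • A) *ᵥ x) (A *ᵥ (exp (t • A) *ᵥ x)) t := by
  let L : Matrix ι ι ℝ →L[ℝ] ι → ℝ := LinearMap.toContinuousLinearMap
    { toFun := (· *ᵥ x), map_add' := fun _ _ => Matrix.add_mulVec _ _ _,
      map_smul' := fun _ _ => Matrix.smul_mulVec _ _ _ }
  rw [Matrix.mulVec_mulVec]
  exact L.hasFDerivAt.comp_hasDerivAt t (hasDerivAt_exp_smul_const' A t)

end MatrixExp

namespace Matrix

variable {ι : Type*} [Fintype ι] [DecidableEq ι]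

noncomputable def pairOverlap (A : Matrix ι ι ℝ) (i j : ι) : ℝ :=
  A j i + A i j + ∑ k ∈ univ \ {i, j}, min (A i k) (A j k)

theorem mulVec_sub_le_neg_pairOverlap_mul {A : Matrix ι ι ℝ} (hA : ∀ l, ∑ k, A l k = 0)
    {y : ι → ℝ} {i j : ι} (hij : i ≠ j) (hmax : ∀ k, y k ≤ y i) (hmin : ∀ k, y j ≤ y k) :
    (A *ᵥ y) i - (A *ᵥ y) j ≤ -A.pairOverlap i j * (y i - y j) := by
  have hsplit : (A *ᵥ y) i - (A *ᵥ y) j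
      = ∑ k, (A i k * (y k - y i) - A j k * (y k - y j)) := by
    simp only [mulVec, dotProduct, mul_sub, sum_sub_distrib, ← sum_mul, hA, zero_mul]
    ring
  have hrest : ∀ k ∈ univ \ {i, j}, A i k * (y k - y i) - A j k * (y k - y j)
      ≤ -min (A i k) (A j k) * (y i - y j) := fun k _ => by
    simpa using mul_sub_mul_le_neg_min_mul (a := A i k) (b := A j k)
      (sub_nonpos.2 (hmax k)) (sub_nonneg.2 (hmin k))
  rw [hsplit, ← sum_sdiff (subset_univ {i, j}), sum_pair hij, pairOverlap]
  calc _ ≤ ∑ k ∈ univ \ {i, j}, -min (A i k) (A j k) * (y i - y j)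
          + (-(A j i + A i j) * (y i - y j)) := by
        gcongr with k hk
        · exact hrest k hk
        · linarith
    _ = _ := by rw [← sum_mul, sum_neg_distrib]; ring

theorem exists_mulVec_sub_eq_neg_pairOverlap {A : Matrix ι ι ℝ} (hA : ∀ l, ∑ k, A l k = 0)
    {i j : ι} (hij : i ≠ j) :
    ∃ x : ι → ℝ, x i = 1 ∧ x j = 0 ∧ (∀ k, x k ∈ Set.Icc 0 1) ∧
      (A *ᵥ x) i - (A *ᵥ x) j = -A.pairOverlap i j := by
  let x : ι → ℝ := fun k => if k = i then 1 else if k = j then 0 else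
    if A j k ≤ A i k then 1 else 0
  have hxi : x i = 1 := by simp [x]
  have hxj : x j = 0 := by simp [x, hij.symm]
  refine ⟨x, hxi, hxj, fun k => by simp only [x]; split_ifs <;> simp, ?_⟩
  have hrest : ∀ k ∈ univ \ {i, j}, (A i k - A j k) * x k = A i k - min (A i k) (A j k) := by
    intro k hk
    obtain ⟨hki, hkj⟩ : k ≠ i ∧ k ≠ j := by simpa using hk
    simp only [x, hki, hkj, if_false]
    split_ifs with h
    · rw [min_eq_right h]; ring
    · rw [min_eq_left (le_of_not_ge h)]; ring
  have hrow : ∑ k ∈ univ \ {i, j}, A i k = -A i i - A i j := by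
    have := sum_sdiff (f := A i) (subset_univ {i, j})
    rw [hA i, sum_pair hij] at this
    linarith
  have hsplit : (A *ᵥ x) i - (A *ᵥ x) j = ∑ k, (A i k - A j k) * x k := by
    simp only [mulVec, dotProduct, sub_mul, sum_sub_distrib]
  rw [hsplit, ← sum_sdiff (subset_univ {i, j}), sum_congr rfl hrest, sum_sub_distrib, hrow,
    sum_pair hij, pairOverlap, hxi, hxj]
  ring

end Matrix

section Diameter

variable {n : ℕ}

theorem diamSemi_eq_sup' [NeZero n] (x : Fin n → ℝ) :
    diamSemi n x = univ.sup' univ_nonempty (fun p : Fin n × Fin n => x p.1 - x p.2) := by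
  rw [sup'_eq_csSup_image, coe_univ, Set.image_univ, diamSemi]
  congr 1
  ext r
  exact ⟨fun ⟨i, j, h⟩ => ⟨(i, j), h.symm⟩, fun ⟨p, hp⟩ => ⟨p.1, p.2, hp.symm⟩⟩

theorem sub_le_diamSemi (x : Fin n → ℝ) (i j : Fin n) : x i - x j ≤ diamSemi n x := by
  have : NeZero n := NeZero.of_pos i.pos
  rw [diamSemi_eq_sup']
  exact le_sup' (fun p : Fin n × Fin n => x p.1 - x p.2) (mem_univ (i, j))

theorem diamSemi_le_iff [NeZero n] {x : Fin n → ℝ} {c : ℝ} :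
    diamSemi n x ≤ c ↔ ∀ i j, x i - x j ≤ c := by
  simp [diamSemi_eq_sup', sup'_le_iff]

theorem continuous_diamSemi [NeZero n] : Continuous (diamSemi n) := by
  simp_rw [funext diamSemi_eq_sup']
  exact Continuous.finset_sup'_apply univ_nonempty fun p _ =>
    (continuous_apply p.1).sub (continuous_apply p.2)

end Diameter

section Flow

variable {n : ℕ} {A : Matrix (Fin n) (Fin n) ℝ}

theorem Matrix.mulVec_sub_le_mul_diamSemi (hA : ∀ l, ∑ k, A l k = 0) {h : ℝ}
    (hh : ∀ i j, i ≠ j → -A.pairOverlap i j ≤ h) {y : Fin n → ℝ} {i j : Fin n}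
    (hij : y i - y j = diamSemi n y) :
    (A *ᵥ y) i - (A *ᵥ y) j ≤ h * diamSemi n y := by
  rcases eq_or_ne i j with rfl | hne
  · simp [← hij]
  have hmax : ∀ k, y k ≤ y i := fun k => by linarith [sub_le_diamSemi y k j]
  have hmin : ∀ k, y j ≤ y k := fun k => by linarith [sub_le_diamSemi y i k]
  calc (A *ᵥ y) i - (A *ᵥ y) j ≤ -A.pairOverlap i j * (y i - y j) :=
        mulVec_sub_le_neg_pairOverlap_mul hA hne hmax hmin
    _ ≤ h * (y i - y j) := mul_le_mul_of_nonneg_right (hh i j hne) (sub_nonneg.2 (hmin i))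
    _ = h * diamSemi n y := by rw [hij]

theorem diamSemi_exp_smul_mulVec_le [NeZero n] (hA : ∀ l, ∑ k, A l k = 0) {h : ℝ}
    (hh : ∀ i j, i ≠ j → -A.pairOverlap i j ≤ h) {t : ℝ} (ht : 0 ≤ t) (x : Fin n → ℝ) :
    diamSemi n (exp (t • A) *ᵥ x) ≤ Real.exp (h * t) * diamSemi n x := by
  set y : ℝ → Fin n → ℝ := fun s => exp (s • A) *ᵥ x
  have hy : ∀ s, HasDerivAt y (A *ᵥ y s) s := hasDerivAt_exp_smul_mulVec A x
  have hcont : Continuous fun s => diamSemi n (y s) :=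
    continuous_diamSemi.comp (continuous_iff_continuousAt.2 fun s => (hy s).continuousAt)
  have hdini : ∀ s, ∀ r, h * diamSemi n (y s) < r →
      ∃ᶠ z in 𝓝[>] s, (z - s)⁻¹ * (diamSemi n (y z) - diamSemi n (y s)) < r := by
    intro s r hr
    simp_rw [diamSemi_eq_sup']
    refine (eventually_slope_finset_sup'_lt univ_nonempty
      (g := fun (p : Fin n × Fin n) u => y u p.1 - y u p.2)
      (fun p _ => (hasDerivAt_pi.1 (hy s) p.1).sub (hasDerivAt_pi.1 (hy s) p.2))
      fun p _ hp => ?_).frequently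
    refine lt_of_le_of_lt (A.mulVec_sub_le_mul_diamSemi hA hh ?_) hr
    rw [diamSemi_eq_sup']
    exact hp
  have := le_gronwallBound_of_liminf_deriv_right_le (δ := diamSemi n x) (K := h) (ε := 0)
    hcont.continuousOn (fun s _ => hdini s) (by simp [y]) (fun _ _ => by simp) t ⟨ht, le_rfl⟩
  simpa [gronwallBound_ε0, mul_comm] using this

theorem neg_pairOverlap_le_of_diamSemi_exp_smul_mulVec_le (hA : ∀ l, ∑ k, A l k = 0) {α : ℝ}
    (hα : ∀ t : ℝ, 0 ≤ t → ∀ x : Fin n → ℝ,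
      diamSemi n (exp (t • A) *ᵥ x) ≤ Real.exp (α * t) * diamSemi n x)
    {i j : Fin n} (hij : i ≠ j) : -A.pairOverlap i j ≤ α := by
  have : NeZero n := NeZero.of_pos i.pos
  obtain ⟨x, hxi, hxj, hx, hAx⟩ := A.exists_mulVec_sub_eq_neg_pairOverlap hA hij
  have hdiam : diamSemi n x = 1 := by
    refine le_antisymm (diamSemi_le_iff.2 fun a b => ?_) ?_
    · linarith [(hx a).2, (hx b).1]
    · simpa [hxi, hxj] using sub_le_diamSemi x i j
  have hflow : ∀ k, HasDerivAt (fun s : ℝ => (exp (s • A) *ᵥ x) k) ((A *ᵥ x) k) 0 := fun k => by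
    simpa using hasDerivAt_pi.1 (hasDerivAt_exp_smul_mulVec A x 0) k
  have hexp : HasDerivAt (fun s => Real.exp (α * s)) α 0 := by
    simpa using ((hasDerivAt_id (0 : ℝ)).const_mul α).exp
  rw [← hAx]
  refine le_of_hasDerivAt_of_le_right ((hflow i).sub (hflow j)) hexp (by simp [hxi, hxj])
    fun z hz => ?_
  calc (exp (z • A) *ᵥ x) i - (exp (z • A) *ᵥ x) j ≤ diamSemi n (exp (z • A) *ᵥ x) :=
        sub_le_diamSemi _ i j
    _ ≤ Real.exp (α * z) := by simpa [hdiam] using hα z hz.le x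

end Flow

theorem linear_flow_diameter_contraction_rate (n : ℕ) (hn : 1 < n)
    (A : Matrix (Fin n) (Fin n) ℝ) (hA : A.mulVec (fun _ => (1 : ℝ)) = 0) :
    IsLeast {α : ℝ | ∀ t : ℝ, 0 ≤ t → ∀ x : Fin n → ℝ,
        diamSemi n ((NormedSpace.exp (t • A)).mulVec x) ≤ Real.exp (α * t) * diamSemi n x}
      (- sInf {r : ℝ | ∃ i j : Fin n, i ≠ j ∧
          r = A j i + A i j + ∑ k ∈ Finset.univ \ {i, j}, min (A i k) (A j k)}) := by
  have : NeZero n := NeZero.of_pos (by omega)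
  have hrow : ∀ l, ∑ k, A l k = 0 := fun l => by
    simpa [Matrix.mulVec, dotProduct] using congrFun hA l
  set S := {r : ℝ | ∃ i j : Fin n, i ≠ j ∧ r = A.pairOverlap i j}
  have hS : S.Finite := (Set.finite_range fun p : Fin n × Fin n => A.pairOverlap p.1 p.2).subset
    (by rintro _ ⟨i, j, -, rfl⟩; exact ⟨(i, j), rfl⟩)
  have hS' : S.Nonempty := ⟨_, 0, ⟨1, hn⟩, Fin.ne_of_val_ne zero_ne_one, rfl⟩
  refine ⟨fun t ht x => diamSemi_exp_smul_mulVec_le hrow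
    (fun i j hij => neg_le_neg (csInf_le hS.bddBelow ⟨i, j, hij, rfl⟩)) ht x, fun α hα => ?_⟩
  rw [neg_le]
  refine le_csInf hS' ?_
  rintro _ ⟨i, j, hij, rfl⟩
  exact neg_le.1 (neg_pairOverlap_le_of_diamSemi_exp_smul_mulVec_le hrow hα hij)
end
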